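/- arXiv:1107.0482 — 6 statements merged into one kernel-verified Lean document; each statement's English description precedes it below -/
import Mathlib

section
/- Under the hypotheses of the preceding statement (λ = I + ε·k, ε² = 0, ∂_c ε = 0), the vertical torsion T^a_{bc} := C^a_{bc} − C^a_{cb} equals ε·(∂_c(k^a_b) − ∂_b(k^a_c)). -/
/-- Vertical connection coefficients of the linearized EAP space. -/
noncomputable def vC {n : ℕ} {A : Type*} [CommRing A]
    (D : Fin n → Derivation ℤ A A) (ε : A) (k : Matrix (Fin n) (Fin n) A)
    (a b c : Fin n) : A :=
  ∑ i, ((1 + ε • k)⁻¹ : Matrix (Fin n) (Fin n) A) a i * D c ((1 + ε • k) i b)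

lemma vC_eq {n : ℕ} {A : Type*} [CommRing A]
    (D : Fin n → Derivation ℤ A A) (ε : A) (hε : ε ^ 2 = 0)
    (hDε : ∀ c, D c ε = 0) (k : Matrix (Fin n) (Fin n) A) (a b c : Fin n) :
    vC D ε k a b c = ε * D c (k a b) := by
  have hεε : ε * ε = 0 := by rw [← sq]; exact hε
  have hinv : ((1 + ε • k)⁻¹ : Matrix (Fin n) (Fin n) A) = 1 - ε • k := by
    apply Matrix.inv_eq_right_inv
    have h2 : (ε • k) * (ε • k) = (ε * ε) • (k * k) := by
      rw [Matrix.smul_mul, Matrix.mul_smul, smul_smul]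
    rw [mul_sub, add_mul, add_mul, one_mul, mul_one, h2, hεε, zero_smul]
    simp
  unfold vC
  rw [hinv]
  have hD : ∀ i, D c ((1 + ε • k) i b) = ε * D c (k i b) := by
    intro i
    have h1 : (1 + ε • k) i b = (if i = b then 1 else 0) + ε * k i b := by
      simp [Matrix.add_apply, Matrix.one_apply, Matrix.smul_apply, smul_eq_mul]
    rw [h1, map_add]
    have h2 : D c (if i = b then (1:A) else 0) = 0 := by split_ifs <;> simp
    rw [h2, zero_add, Derivation.leibniz]
    simp [hDε c, smul_eq_mul]
  simp only [hD, Matrix.sub_apply, Matrix.one_apply, Matrix.smul_apply,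
    smul_eq_mul, sub_mul]
  rw [Finset.sum_sub_distrib]
  have hs1 : ∑ i, (if a = i then (1:A) else 0) * (ε * D c (k i b))
      = ε * D c (k a b) := by
    simp [ite_mul]
  have hs2 : ∑ i, ε * k a i * (ε * D c (k i b)) = 0 := by
    apply Finset.sum_eq_zero
    intro i _
    have : ε * k a i * (ε * D c (k i b)) = (ε * ε) * (k a i * D c (k i b)) := by
      ring
    rw [this, hεε, zero_mul]
  rw [hs1, hs2, sub_zero]

/-- Linearization of the vertical torsion T^a_{bc} = C^a_{bc} − C^a_{cb}
(Theorem 4.1(e)). -/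
theorem stmt_5 {n : ℕ} {A : Type*} [CommRing A]
    (D : Fin n → Derivation ℤ A A) (ε : A) (hε : ε ^ 2 = 0)
    (hDε : ∀ c, D c ε = 0) (k : Matrix (Fin n) (Fin n) A) (a b c : Fin n) :
    vC D ε k a b c - vC D ε k a c b = ε * (D c (k a b) - D b (k a c)) := by
  rw [vC_eq D ε hε hDε k a b c, vC_eq D ε hε hDε k a c b]
  ring
end

section
/- Under the hypotheses of the preceding statement, the contracted torsion (basic vector) C_b := T^a_{ba} = Σ_a (C^a_{ba} − C^a_{ab}) equals ε·(Σ_a ∂_a(k^a_b) − Σ_a ∂_b(k^a_a)). -/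
lemma inv_one_add {n : ℕ} {A : Type*} [CommRing A] (ε : A) (hε : ε ^ 2 = 0)
    (k : Matrix (Fin n) (Fin n) A) :
    ((1 + ε • k)⁻¹ : Matrix (Fin n) (Fin n) A) = 1 - ε • k := by
  apply Matrix.inv_eq_right_inv
  rw [mul_sub, mul_one, add_mul, one_mul, smul_mul_smul_comm, ← pow_two, hε, zero_smul,
    add_zero]
  abel

lemma D_entry {n : ℕ} {A : Type*} [CommRing A]
    (D : Fin n → Derivation ℤ A A) (ε : A)
    (hDε : ∀ c, D c ε = 0) (k : Matrix (Fin n) (Fin n) A) (i b c : Fin n) :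
    D c ((1 + ε • k) i b) = ε * D c (k i b) := by
  have : (1 + ε • k) i b = (1 : Matrix (Fin n) (Fin n) A) i b + ε * k i b := rfl
  rw [this, map_add, Derivation.leibniz, hDε, smul_zero, add_zero, smul_eq_mul,
    Matrix.one_apply]
  split <;> simp

/-- Linearization of the basic vector C_b = T^a_{ba} (Theorem 4.1(f)). -/
theorem stmt_6 {n : ℕ} {A : Type*} [CommRing A]
    (D : Fin n → Derivation ℤ A A) (ε : A) (hε : ε ^ 2 = 0)
    (hDε : ∀ c, D c ε = 0) (k : Matrix (Fin n) (Fin n) A) (b : Fin n) :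
    ∑ a, (vC D ε k a b a - vC D ε k a a b)
      = ε * ((∑ a, D a (k a b)) - ∑ a, D b (k a a)) := by
  simp only [vC_eq D ε hε hDε]
  rw [mul_sub, Finset.mul_sum, Finset.mul_sum, ← Finset.sum_sub_distrib]
end

section
/- With λ = I + ε·k, ε² = 0, ∂_c ε = 0, g = λᵀλ, w = k + kᵀ, and 2 invertible: the contortion-type tensor γ^a_{bc} := C^a_{bc} − C̊^a_{bc} equals ε·(∂_c(k^a_b) − W_{abc}), where W_{abc} := (1/2)(∂_c w_{ab} + ∂_b w_{ac} − ∂_a w_{bc}). -/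
open Matrix

/-- Christoffel-type coefficients of a metric g. -/
noncomputable def chr {n : ℕ} {A : Type*} [CommRing A] [Invertible (2 : A)]
    (D : Fin n → Derivation ℤ A A) (g : Matrix (Fin n) (Fin n) A)
    (a b c : Fin n) : A :=
  ⅟(2 : A) * ∑ d, (g⁻¹ : Matrix (Fin n) (Fin n) A) a d *
    (D b (g c d) + D c (g b d) - D d (g b c))

section aux
variable {n : ℕ} {A : Type*} [CommRing A]

lemma aux_inv (ε : A) (hε : ε ^ 2 = 0) (m : Matrix (Fin n) (Fin n) A) :
    ((1 + ε • m)⁻¹ : Matrix (Fin n) (Fin n) A) = 1 - ε • m := by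
  apply inv_eq_right_inv
  have hx : (ε • m) * (ε • m) = 0 := by
    rw [smul_mul_smul_comm, ← pow_two, hε, zero_smul]
  set x := ε • m
  have h : (1 + x) * (1 - x) = 1 - x * x := by noncomm_ring
  rw [h, hx, sub_zero]

lemma aux_g (ε : A) (hε : ε ^ 2 = 0) (k : Matrix (Fin n) (Fin n) A) :
    (1 + ε • k)ᵀ * (1 + ε • k) = 1 + ε • (k + kᵀ) := by
  rw [transpose_add, transpose_one, transpose_smul]
  have hx : (ε • kᵀ) * (ε • k) = 0 := by
    rw [smul_mul_smul_comm, ← pow_two, hε, zero_smul]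
  set x := ε • kᵀ
  set y := ε • k
  have h : (1 + x) * (1 + y) = 1 + (y + x) + x * y := by noncomm_ring
  rw [h, hx, add_zero, smul_add]

end aux

/-- Linearization of the contortion-type tensor γ^a_{bc} = C^a_{bc} − C̊^a_{bc}
(Theorem 4.1(h)). -/
theorem stmt_8 {n : ℕ} {A : Type*} [CommRing A] [Invertible (2 : A)]
    (D : Fin n → Derivation ℤ A A)
    (hcomm : ∀ b c x, D b (D c x) = D c (D b x))
    (ε : A) (hε : ε ^ 2 = 0) (hDε : ∀ c, D c ε = 0)
    (k : Matrix (Fin n) (Fin n) A) (a b c : Fin n) :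
    vC D ε k a b c - chr D ((1 + ε • k)ᵀ * (1 + ε • k)) a b c
      = ε * (D c (k a b) -
          ⅟(2 : A) * (D c ((k + kᵀ) a b) + D b ((k + kᵀ) a c) - D a ((k + kᵀ) b c))) := by
  have hε0 : ∀ x y : A, ε * x * (ε * y) = 0 := by
    intro x y
    have : ε * x * (ε * y) = ε ^ 2 * (x * y) := by ring
    rw [this, hε, zero_mul]
  set w : Matrix (Fin n) (Fin n) A := k + kᵀ with hw
  have hginv : ((1 + ε • w)⁻¹ : Matrix (Fin n) (Fin n) A) = 1 - ε • w :=
    aux_inv ε hε w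
  rw [vC, chr, aux_g ε hε k, ← hw, hginv, aux_inv ε hε k]
  have hsum1 : ∑ i, (1 - ε • k) a i * D c ((1 + ε • k) i b)
      = ε * D c (k a b) := by
    have key : ∀ i ∈ Finset.univ, (1 - ε • k) a i * D c ((1 + ε • k) i b)
        = if a = i then ε * D c (k i b) else 0 := by
      intro i _
      simp only [Matrix.sub_apply, Matrix.add_apply, Matrix.one_apply,
        Matrix.smul_apply, smul_eq_mul, map_add, Derivation.leibniz, hDε,
        mul_zero, smul_eq_mul, zero_mul, add_zero]
      have hDif : D c (if i = b then (1:A) else 0) = 0 := by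
        split <;> simp
      rw [hDif, zero_add]
      split
      · rw [sub_mul, one_mul, hε0, sub_zero]
      · rw [zero_sub, neg_mul, hε0, neg_zero]
    rw [Finset.sum_congr rfl key]
    simp
  have hsum2 : ∑ d, (1 - ε • w) a d *
      (D b ((1 + ε • w) c d) + D c ((1 + ε • w) b d) - D d ((1 + ε • w) b c))
      = ε * (D b (w c a) + D c (w b a) - D a (w b c)) := by
    have hD : ∀ (e : Fin n) (i j : Fin n), D e ((1 + ε • w) i j) = ε * D e (w i j) := by
      intro e i j
      simp only [Matrix.add_apply, Matrix.smul_apply, smul_eq_mul, map_add,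
        Derivation.leibniz, hDε, smul_eq_mul, mul_zero, add_zero]
      have hDif : D e ((1 : Matrix (Fin n) (Fin n) A) i j) = 0 := by
        simp [Matrix.one_apply]; split <;> simp
      rw [hDif, zero_add]
    have key : ∀ d ∈ Finset.univ, (1 - ε • w) a d *
        (D b ((1 + ε • w) c d) + D c ((1 + ε • w) b d) - D d ((1 + ε • w) b c))
        = if a = d then ε * (D b (w c d) + D c (w b d) - D d (w b c)) else 0 := by
      intro d _
      rw [hD, hD, hD]
      simp only [Matrix.sub_apply, Matrix.one_apply, Matrix.smul_apply, smul_eq_mul]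
      have hre : ε * D b (w c d) + ε * D c (w b d) - ε * D d (w b c)
          = ε * (D b (w c d) + D c (w b d) - D d (w b c)) := by ring
      rw [hre]
      split
      · rw [sub_mul, one_mul, hε0, sub_zero]
      · rw [zero_sub, neg_mul, hε0, neg_zero]
    rw [Finset.sum_congr rfl key]
    simp
  rw [hsum1, hsum2]
  have hwsym : ∀ i j, w i j = w j i := by
    intro i j
    simp [hw, Matrix.add_apply, Matrix.transpose_apply, add_comm]
  rw [hwsym c a, hwsym b a]
  ring
end

section
/- With λ = I + ε·k, ε² = 0, ∂_c ε = 0: the symmetrized object Ω^a_{bc} := C^a_{bc} + C^a_{cb} − 2C̊^a_{bc} equals ε·(∂_c(k^a_b) + ∂_b(k^a_c) − (∂_c w_{ab} + ∂_b w_{ac} − ∂_a w_{bc})), where w = k + kᵀ and 2 is invertible. -/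
open Matrix

/-! Since `ε ^ 2 = 0`, `(1 + ε • M)⁻¹ = 1 - ε • M` and
`(1 + ε • k)ᵀ * (1 + ε • k) = 1 + ε • (kᵀ + k)`;
the derivations kill constants and `ε`, so `C` and `C̊` collapse to `ε` times their first-order
parts, and the identity becomes a linear one among the `D c (k a b)`. -/

section DualNumberMatrix
variable {m A : Type*} [CommRing A] {ε : A}

lemma smul_mul_smul_of_sq_eq_zero [Fintype m] (hε : ε ^ 2 = 0) (M N : Matrix m m A) :
    (ε • M) * (ε • N) = 0 := by
  rw [Matrix.smul_mul, Matrix.mul_smul, smul_smul, ← sq, hε, zero_smul]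

lemma inv_one_add_smul_of_sq_eq_zero [Fintype m] [DecidableEq m] (hε : ε ^ 2 = 0)
    (M : Matrix m m A) :
    (1 + ε • M)⁻¹ = 1 - ε • M := by
  apply Matrix.inv_eq_right_inv
  rw [Matrix.mul_sub, Matrix.add_mul, Matrix.add_mul, smul_mul_smul_of_sq_eq_zero hε]
  simp

lemma transpose_one_add_smul_mul_self_of_sq_eq_zero [Fintype m] [DecidableEq m] (hε : ε ^ 2 = 0)
    (M : Matrix m m A) :
    (1 + ε • M)ᵀ * (1 + ε • M) = 1 + ε • (Mᵀ + M) := by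
  rw [transpose_add, transpose_one, transpose_smul, Matrix.add_mul, Matrix.mul_add,
    Matrix.mul_add, smul_mul_smul_of_sq_eq_zero hε]
  simp only [Matrix.one_mul, Matrix.mul_one, add_zero, smul_add]
  abel

lemma sum_one_sub_smul_mul_smul_of_sq_eq_zero [Fintype m] [DecidableEq m] (hε : ε ^ 2 = 0)
    (M : Matrix m m A) (a : m) (f : m → A) :
    ∑ i, (1 - ε • M) a i * (ε * f i) = ε * f a := by
  have hterm : ∀ i, (1 - ε • M) a i * (ε * f i) = (1 : Matrix m m A) a i * (ε * f i) := by
    intro i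
    rw [Matrix.sub_apply, Matrix.smul_apply, smul_eq_mul, sub_mul,
      show ε * M a i * (ε * f i) = ε ^ 2 * (M a i * f i) by ring, hε, zero_mul, sub_zero]
  rw [Finset.sum_congr rfl fun i _ => hterm i]
  simp [Matrix.one_apply]

lemma Derivation.apply_one_add_smul_apply [DecidableEq m] {R : Type*} [CommRing R]
    [Algebra R A] (D : Derivation R A A) (hDε : D ε = 0) (M : Matrix m m A) (i j : m) :
    D ((1 + ε • M) i j) = ε * D (M i j) := by
  rw [Matrix.add_apply, Matrix.smul_apply, smul_eq_mul, map_add, Derivation.leibniz, hDε,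
    Matrix.one_apply]
  split_ifs <;> simp

end DualNumberMatrix

section Linearization
variable {n : ℕ} {A : Type*} [CommRing A] {D : Fin n → Derivation ℤ A A} {ε : A}

lemma vC_eq_of_sq_eq_zero (hε : ε ^ 2 = 0) (hDε : ∀ c, D c ε = 0)
    (k : Matrix (Fin n) (Fin n) A) (a b c : Fin n) :
    vC D ε k a b c = ε * D c (k a b) := by
  simp only [vC, inv_one_add_smul_of_sq_eq_zero hε, (D c).apply_one_add_smul_apply (hDε c)]
  exact sum_one_sub_smul_mul_smul_of_sq_eq_zero hε k a _

lemma chr_one_add_smul_of_sq_eq_zero [Invertible (2 : A)] (hε : ε ^ 2 = 0)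
    (hDε : ∀ c, D c ε = 0) (w : Matrix (Fin n) (Fin n) A) (a b c : Fin n) :
    chr D (1 + ε • w) a b c
      = ⅟(2 : A) * (ε * (D b (w c a) + D c (w b a) - D a (w b c))) := by
  have hbracket : ∀ d, D b ((1 + ε • w) c d) + D c ((1 + ε • w) b d)
      - D d ((1 + ε • w) b c) = ε * (D b (w c d) + D c (w b d) - D d (w b c)) := by
    intro d
    simp only [Derivation.apply_one_add_smul_apply _ (hDε _)]
    ring
  simp only [chr, inv_one_add_smul_of_sq_eq_zero hε, hbracket]
  rw [sum_one_sub_smul_mul_smul_of_sq_eq_zero hε w a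
    (fun d => D b (w c d) + D c (w b d) - D d (w b c))]

end Linearization

theorem stmt_9_general {n : ℕ} {A : Type*} [CommRing A] [Invertible (2 : A)]
    (D : Fin n → Derivation ℤ A A)
    (ε : A) (hε : ε ^ 2 = 0) (hDε : ∀ c, D c ε = 0)
    (k : Matrix (Fin n) (Fin n) A) (a b c : Fin n) :
    vC D ε k a b c + vC D ε k a c b
        - 2 * chr D ((1 + ε • k)ᵀ * (1 + ε • k)) a b c
      = ε * (D c (k a b) + D b (k a c) -
          (D c ((k + kᵀ) a b) + D b ((k + kᵀ) a c) - D a ((k + kᵀ) b c))) := by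
  rw [vC_eq_of_sq_eq_zero hε hDε, vC_eq_of_sq_eq_zero hε hDε,
    transpose_one_add_smul_mul_self_of_sq_eq_zero hε, chr_one_add_smul_of_sq_eq_zero hε hDε,
    ← mul_assoc, mul_invOf_self, one_mul]
  simp only [Matrix.add_apply, transpose_apply, map_add]
  ring

/-- Linearization of Ω^a_{bc} = C^a_{bc} + C^a_{cb} − 2C̊^a_{bc}
(Theorem 4.1(j)). -/
theorem stmt_9 {n : ℕ} {A : Type*} [CommRing A] [Invertible (2 : A)]
    (D : Fin n → Derivation ℤ A A)
    (hcomm : ∀ b c x, D b (D c x) = D c (D b x))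
    (ε : A) (hε : ε ^ 2 = 0) (hDε : ∀ c, D c ε = 0)
    (k : Matrix (Fin n) (Fin n) A) (a b c : Fin n) :
    vC D ε k a b c + vC D ε k a c b
        - 2 * chr D ((1 + ε • k)ᵀ * (1 + ε • k)) a b c
      = ε * (D c (k a b) + D b (k a c) -
          (D c ((k + kᵀ) a b) + D b ((k + kᵀ) a c) - D a ((k + kᵀ) b c))) :=
  stmt_9_general D ε hε hDε k a b c
end

section
/- Let w_{ab} be a symmetric array of smooth functions on ℝ⁴ satisfying w_{ab;dd} = w_{ad;bd} + w_{bd;ad} − w_{dd;ab} (summation over d, semicolon denoting partial derivative). If additionally the harmonic gauge condition Σ_d ∂_d w_{ad} = (1/2) ∂_a (Σ_d w_{dd}) holds for all a, then each component w_{ab} is harmonic: Δw_{ab} = Σ_d ∂_d∂_d w_{ab} = 0. -/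
/-- Partial derivative in the d-th coordinate direction. -/
noncomputable def pd {n : ℕ} (d : Fin n) (f : (Fin n → ℝ) → ℝ) (x : Fin n → ℝ) : ℝ :=
  fderiv ℝ f x (Pi.single d 1)

lemma pd_contDiff {n : ℕ} (d : Fin n) {f : (Fin n → ℝ) → ℝ} (hf : ContDiff ℝ (⊤ : ℕ∞) f) :
    ContDiff ℝ (⊤ : ℕ∞) (pd d f) := by
  unfold pd
  exact (hf.fderiv_right (m := (⊤ : ℕ∞)) (by simp)).clm_apply contDiff_const

lemma pd_pd_eq {n : ℕ} (a b : Fin n) {f : (Fin n → ℝ) → ℝ} (hf : ContDiff ℝ (⊤ : ℕ∞) f)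
    (x : Fin n → ℝ) :
    pd a (pd b f) x = fderiv ℝ (fderiv ℝ f) x (Pi.single a 1) (Pi.single b 1) := by
  unfold pd
  have hc : DifferentiableAt ℝ (fderiv ℝ f) x :=
    ((hf.fderiv_right (m := (⊤ : ℕ∞)) (by simp)).differentiable (by simp)) x
  rw [fderiv_clm_apply hc (differentiableAt_const _)]
  simp

lemma pd_comm {n : ℕ} (a b : Fin n) {f : (Fin n → ℝ) → ℝ} (hf : ContDiff ℝ (⊤ : ℕ∞) f)
    (x : Fin n → ℝ) : pd a (pd b f) x = pd b (pd a f) x := by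
  rw [pd_pd_eq a b hf, pd_pd_eq b a hf]
  exact ((hf.contDiffAt).isSymmSndFDerivAt (by rw [minSmoothness_of_isRCLikeNormedField]; exact WithTop.coe_le_coe.mpr (le_top : (2 : ℕ∞) ≤ ⊤))) _ _

lemma pd_sum {n : ℕ} (d : Fin n) {ι : Type*} (s : Finset ι)
    (f : ι → (Fin n → ℝ) → ℝ) (hf : ∀ i ∈ s, ContDiff ℝ (⊤ : ℕ∞) (f i)) (x : Fin n → ℝ) :
    pd d (fun y => ∑ i ∈ s, f i y) x = ∑ i ∈ s, pd d (f i) x := by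
  unfold pd
  rw [fderiv_fun_sum (fun i hi => ((hf i hi).differentiable (by simp)) x)]
  simp

lemma pd_const_mul {n : ℕ} (d : Fin n) (c : ℝ) {f : (Fin n → ℝ) → ℝ}
    (hf : ContDiff ℝ (⊤ : ℕ∞) f) (x : Fin n → ℝ) :
    pd d (fun y => c * f y) x = c * pd d f x := by
  unfold pd
  rw [fderiv_const_mul ((hf.differentiable (by simp)) x)]
  simp

/-- Section 6: under the harmonic gauge condition w_{ad;d} = ½ w_{dd;a}, the
first-order symmetric vertical field equations on ℝ⁴ reduce to the Laplace
equation Δw_{ab} = 0 in the internal variables. -/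
theorem stmt_13 (w : Fin 4 → Fin 4 → (Fin 4 → ℝ) → ℝ)
    (hsmooth : ∀ a b, ContDiff ℝ (⊤ : ℕ∞) (w a b))
    (hsymm : ∀ a b, w a b = w b a)
    (heq : ∀ a b x,
      ∑ d, pd d (pd d (w a b)) x
        = (∑ d, pd b (pd d (w a d)) x) + (∑ d, pd a (pd d (w b d)) x)
          - pd a (pd b (fun y => ∑ d, w d d y)) x)
    (hgauge : ∀ a x, ∑ d, pd d (w a d) x
        = (1 / 2) * pd a (fun y => ∑ d, w d d y) x) :
    ∀ a b x, ∑ d, pd d (pd d (w a b)) x = 0 := by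
  intro a b x
  set T : (Fin 4 → ℝ) → ℝ := fun y => ∑ d, w d d y with hT
  have hTsm : ContDiff ℝ (⊤ : ℕ∞) T := ContDiff.sum (fun d _ => hsmooth d d)
  have key : ∀ (c e : Fin 4) (x : Fin 4 → ℝ),
      ∑ d, pd e (pd d (w c d)) x = (1 / 2) * pd e (pd c T) x := by
    intro c e y
    have h1 : (fun z => ∑ d, pd d (w c d) z) = fun z => (1 / 2) * pd c T z :=
      funext (fun z => hgauge c z)
    calc ∑ d, pd e (pd d (w c d)) y
        = pd e (fun z => ∑ d, pd d (w c d) z) y := by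
          rw [pd_sum e Finset.univ (fun d => pd d (w c d))
            (fun d _ => pd_contDiff d (hsmooth c d)) y]
      _ = pd e (fun z => (1 / 2) * pd c T z) y := by rw [h1]
      _ = (1 / 2) * pd e (pd c T) y := pd_const_mul e _ (pd_contDiff c hTsm) y
  rw [heq a b x, key a b x, key b a x, pd_comm b a hTsm x]
  ring
end

section
/- Let A be a commutative ring with commuting derivations ∂_μ, ε ∈ A with ε² = 0, ∂_μ ε = 0, λ = I + ε·h, and define Γ^α_{μν} := Σ_i (λ⁻¹)^α_i ∂_ν(λ^i_μ) and Λ^α_{μν} := Γ^α_{μν} − Γ^α_{νμ}. Then the products C_μ N_ν, where C_μ := Σ_α(Λ^α_{μα}) and N_ν := ε·Σ_a ∂_ν(h^a_a) (for a second perturbation matrix with the same ε), satisfy C_μ N_ν = 0. -/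
/-- Horizontal connection coefficients Γ^α_{μν} = λᵢ^α ∂_ν λ^i_μ of the
linearized EAP space. -/
noncomputable def hGamma {n : ℕ} {A : Type*} [CommRing A]
    (D : Fin n → Derivation ℤ A A) (ε : A) (h : Matrix (Fin n) (Fin n) A)
    (α μ ν : Fin n) : A :=
  ∑ i, ((1 + ε • h)⁻¹ : Matrix (Fin n) (Fin n) A) α i * D ν ((1 + ε • h) i μ)

lemma eps_dvd_hGamma {n : ℕ} {A : Type*} [CommRing A]
    (D : Fin n → Derivation ℤ A A) (ε : A)
    (hDε : ∀ μ, D μ ε = 0) (h : Matrix (Fin n) (Fin n) A)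
    (α μ ν : Fin n) : ε ∣ hGamma D ε h α μ ν := by
  unfold hGamma
  refine Finset.dvd_sum fun i _ => Dvd.dvd.mul_left ?_ _
  have : ((1 + ε • h) i μ) = (1 : Matrix (Fin n) (Fin n) A) i μ + ε * h i μ := by
    simp [Matrix.add_apply, Matrix.smul_apply, smul_eq_mul]
  rw [this]
  have h1 : D ν ((1 : Matrix (Fin n) (Fin n) A) i μ) = 0 := by
    by_cases hiμ : i = μ <;> simp [Matrix.one_apply, hiμ]
  rw [map_add, h1, zero_add, Derivation.leibniz, hDε, smul_eq_mul, smul_eq_mul]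
  exact ⟨D ν (h i μ), by ring⟩

/-- Proposition 5.4(a) at first order: the extra term C_μ N_ν appearing in the
Cartan-type horizontal field equations is of order ε², hence vanishes. -/
theorem stmt_18 {n : ℕ} {A : Type*} [CommRing A]
    (D : Fin n → Derivation ℤ A A) (ε : A) (hε : ε ^ 2 = 0)
    (hDε : ∀ μ, D μ ε = 0) (h k : Matrix (Fin n) (Fin n) A) (μ ν : Fin n) :
    (∑ α, (hGamma D ε h α μ α - hGamma D ε h α α μ)) *
        (ε * ∑ a, D ν (k a a)) = 0 := by
  have hd : ε ∣ ∑ α, (hGamma D ε h α μ α - hGamma D ε h α α μ) :=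
    Finset.dvd_sum fun α _ =>
      dvd_sub (eps_dvd_hGamma D ε hDε h α μ α) (eps_dvd_hGamma D ε hDε h α α μ)
  obtain ⟨c, hc⟩ := hd
  rw [hc]
  linear_combination (c * ∑ a, D ν (k a a)) * hε
end
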